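/- arXiv:1707.02887 — 8 statements merged into one kernel-verified Lean document; each statement's English description precedes it below -/
import Mathlib

section
/- For all positive real numbers B and z₀, the double integral ∫_{-∞}^{∞} ∫_{-B}^{B} z₀ / (z₀² + x² + y²)^{3/2} dy dx equals 4·arctan(B / z₀). -/
/-!
Both integrations are elementary. With `c = z₀² + x²`, the inner integrand has antiderivative
`z₀ y / (c √(c + y²))`, so the inner integral is `2 z₀ B / ((z₀² + x²) √(z₀² + B² + x²))`.
This is even in `x` and has antiderivative `arctan (B x / (z₀ √(z₀² + B² + x²)))`, which vanishes
at `0` and tends to `arctan (B / z₀)` at `+∞`.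
-/

open MeasureTheory Real Filter Topology Set

lemma rpow_three_halves {t : ℝ} (ht : 0 ≤ t) : t ^ ((3 : ℝ) / 2) = t * √t := by
  rw [show (3 : ℝ) / 2 = 1 + 1 / 2 by norm_num, rpow_add' ht (by norm_num), rpow_one,
    sqrt_eq_rpow]

lemma hasDerivAt_div_sqrt_add_sq {c : ℝ} (hc : 0 < c) (y : ℝ) :
    HasDerivAt (fun y => y / √(c + y ^ 2)) (c / (c + y ^ 2) ^ ((3 : ℝ) / 2)) y := by
  have hpos : 0 < c + y ^ 2 := by positivity
  have hsqrt : HasDerivAt (fun y => √(c + y ^ 2)) (2 * y / (2 * √(c + y ^ 2))) y := by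
    simpa using (((hasDerivAt_pow 2 y).const_add c).sqrt hpos.ne')
  refine ((hasDerivAt_id' y).div hsqrt (sqrt_pos.2 hpos).ne').congr_deriv ?_
  rw [rpow_three_halves hpos.le]
  field_simp
  rw [sq_sqrt hpos.le]
  ring

lemma intervalIntegral_div_add_sq_rpow_three_halves (k : ℝ) {c : ℝ} (hc : 0 < c) (a b : ℝ) :
    ∫ y in a..b, k / (c + y ^ 2) ^ ((3 : ℝ) / 2) =
      k / c * (b / √(c + b ^ 2) - a / √(c + a ^ 2)) := by
  have hcont : Continuous fun y : ℝ => c / (c + y ^ 2) ^ ((3 : ℝ) / 2) :=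
    continuous_const.div
      ((by fun_prop : Continuous fun y : ℝ => c + y ^ 2).rpow_const fun _ => Or.inr (by norm_num))
      fun y => (rpow_pos_of_pos (by positivity) _).ne'
  simp_rw [show ∀ y : ℝ, k / (c + y ^ 2) ^ ((3 : ℝ) / 2) =
      k / c * (c / (c + y ^ 2) ^ ((3 : ℝ) / 2)) from fun y => by field_simp,
    intervalIntegral.integral_const_mul,
    intervalIntegral.integral_eq_sub_of_hasDerivAt (fun y _ => hasDerivAt_div_sqrt_add_sq hc y)
      (hcont.intervalIntegrable a b)]

lemma tendsto_div_sqrt_add_sq_atTop (c : ℝ) :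
    Tendsto (fun x => x / √(c + x ^ 2)) atTop (𝓝 1) := by
  have hlim : Tendsto (fun x : ℝ => (√(c / x ^ 2 + 1))⁻¹) atTop (𝓝 1) := by
    have h := ((tendsto_const_nhds (x := c)).div_atTop (tendsto_pow_atTop two_ne_zero)).add_const 1
    simpa using ((continuous_sqrt.tendsto _).comp h).inv₀ (by simp)
  refine hlim.congr' ?_
  filter_upwards [eventually_gt_atTop 0] with x hx
  rw [show c + x ^ 2 = x ^ 2 * (c / x ^ 2 + 1) by field_simp, sqrt_mul (sq_nonneg x),
    sqrt_sq hx.le]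
  field_simp

lemma hasDerivAt_arctan_mul_div_sqrt {a : ℝ} (ha : a ≠ 0) (b x : ℝ) :
    HasDerivAt (fun x => arctan (b / a * (x / √(a ^ 2 + b ^ 2 + x ^ 2))))
      (a * b / ((a ^ 2 + x ^ 2) * √(a ^ 2 + b ^ 2 + x ^ 2))) x := by
  have hc : 0 < a ^ 2 + b ^ 2 := by positivity
  have hpos : 0 < a ^ 2 + b ^ 2 + x ^ 2 := by positivity
  refine (((hasDerivAt_div_sqrt_add_sq hc x).const_mul (b / a)).arctan).congr_deriv ?_
  rw [rpow_three_halves hpos.le]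
  field_simp
  rw [sq_sqrt hpos.le]
  ring

lemma integral_Ioi_mul_div_mul_sqrt {a b : ℝ} (ha : 0 < a) (hb : 0 ≤ b) :
    ∫ x in Ioi 0, a * b / ((a ^ 2 + x ^ 2) * √(a ^ 2 + b ^ 2 + x ^ 2)) = arctan (b / a) := by
  have hlim : Tendsto (fun x => arctan (b / a * (x / √(a ^ 2 + b ^ 2 + x ^ 2)))) atTop
      (𝓝 (arctan (b / a))) := by
    simpa only [mul_one, Function.comp_def] using ((continuous_arctan.tendsto _).comp
      ((tendsto_div_sqrt_add_sq_atTop (a ^ 2 + b ^ 2)).const_mul (b / a)))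
  rw [integral_Ioi_of_hasDerivAt_of_nonneg' (fun x _ => hasDerivAt_arctan_mul_div_sqrt ha.ne' b x)
    (fun x _ => by positivity) hlim]
  simp

/-- For all positive real numbers `B`, `z₀`, the double integral
`∫_{-∞}^{∞} ∫_{-B}^{B} z₀ / (z₀² + x² + y²)^{3/2} dy dx` equals `4 · arctan(B / z₀)`. -/
theorem lis_strip_array_gain (B z₀ : ℝ) (hB : 0 < B) (hz : 0 < z₀) :
    (∫ x : ℝ, ∫ y in (-B)..B, z₀ / (z₀ ^ 2 + x ^ 2 + y ^ 2) ^ ((3 : ℝ) / 2)) =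
      4 * Real.arctan (B / z₀) := by
  set g : ℝ → ℝ := fun x => z₀ * B / ((z₀ ^ 2 + x ^ 2) * √(z₀ ^ 2 + B ^ 2 + x ^ 2))
  have hinner : ∀ x : ℝ,
      ∫ y in (-B)..B, z₀ / (z₀ ^ 2 + x ^ 2 + y ^ 2) ^ ((3 : ℝ) / 2) = 2 * g x := by
    intro x
    rw [intervalIntegral_div_add_sq_rpow_three_halves z₀ (by positivity), neg_sq]
    simp only [g, add_right_comm (z₀ ^ 2) (B ^ 2)]
    field_simp
    ring
  have heven : ∫ x, g x = 2 * ∫ x in Ioi 0, g x := by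
    rw [← integral_comp_abs]
    simp only [g, sq_abs]
  simp_rw [hinner, integral_const_mul, heven, g, integral_Ioi_mul_div_mul_sqrt hz hB.le]
  ring
end

section
/- Let θ > 0, c > 0, β = ⌊1/θ⌋ and α = 1/θ − β, and let N(f) denote, for f ∈ ℝ, the number of integers k with |f − kθ| ≤ 1/2. Then (1/θ)·∫_{−θ/2}^{θ/2} log(1 + c·θ·N(f)) df = α·log(1 + (β+1)·θ·c) + (1 − α)·log(1 + β·θ·c). -/
/-!
The window `[f - 1/2, f + 1/2]` contains `β` or `β + 1` multiples of `θ`, the latter exactly when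
`fract ((f + 1/2) / θ) ≤ fract (1/θ) = α`. After the substitution `x = (f + 1/2) / θ` the integrand
becomes a 1-periodic function of `x` equal to `log (1 + (β+1)θc)` on a fraction `α` of each period
and to `log (1 + βθc)` on the rest, and the integration range has length one period.
-/

open MeasureTheory Real

lemma setOf_abs_sub_mul_le_eq_Icc {θ : ℝ} (hθ : 0 < θ) (f r : ℝ) :
    {k : ℤ | |f - k * θ| ≤ r} = Set.Icc ⌈(f - r) / θ⌉ ⌊(f + r) / θ⌋ := by
  ext k
  simp only [Set.mem_ofPred_eq, Set.mem_Icc, abs_le, Int.ceil_le, Int.le_floor,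
    div_le_iff₀ hθ, le_div_iff₀ hθ]
  constructor <;> rintro ⟨h₁, h₂⟩ <;> constructor <;> linarith

lemma Int.ceil_sub_eq_floor_sub_floor_add_ite {R : Type*} [Field R] [LinearOrder R]
    [IsStrictOrderedRing R] [FloorRing R] (x y : R) :
    ⌈x - y⌉ = ⌊x⌋ - ⌊y⌋ + if Int.fract x ≤ Int.fract y then 0 else 1 := by
  have hxy : x - y = (Int.fract x - Int.fract y) + ((⌊x⌋ - ⌊y⌋ : ℤ) : R) := by
    push_cast; rw [Int.fract, Int.fract]; ring
  rw [hxy, Int.ceil_add_intCast, add_comm]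
  congr 1
  split_ifs <;> rw [Int.ceil_eq_iff] <;> push_cast <;> constructor <;>
    linarith [Int.fract_nonneg x, Int.fract_lt_one x, Int.fract_nonneg y, Int.fract_lt_one y]

lemma natCard_setOf_abs_sub_mul_le {θ r : ℝ} (hθ : 0 < θ) (hr : 0 ≤ r) (f : ℝ) :
    (Nat.card {k : ℤ | |f - k * θ| ≤ r} : ℝ) =
      ⌊2 * r / θ⌋ + if Int.fract ((f + r) / θ) ≤ Int.fract (2 * r / θ) then 1 else 0 := by
  have hsub : (f - r) / θ = (f + r) / θ - 2 * r / θ := by ring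
  have hfloor : 0 ≤ ⌊2 * r / θ⌋ := Int.floor_nonneg.2 (by positivity)
  rw [setOf_abs_sub_mul_le_eq_Icc hθ, ← Finset.coe_Icc, Nat.card_coe_set_eq, Set.ncard_coe_finset,
    Int.card_Icc, hsub, Int.ceil_sub_eq_floor_sub_floor_add_ite,
    ← Int.cast_natCast, Int.toNat_of_nonneg (by split_ifs <;> omega)]
  split_ifs <;> push_cast <;> ring

lemma intervalIntegral_ite_fract_le (a : ℝ) {α : ℝ} (h₀ : 0 ≤ α) (h₁ : α ≤ 1) (A B : ℝ) :
    ∫ x in a..a + 1, (if Int.fract x ≤ α then A else B) = α * A + (1 - α) * B := by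
  set g : ℝ → ℝ := fun x => if Int.fract x ≤ α then A else B
  have hper : Function.Periodic g 1 := fun x => by simp only [g, Int.fract_add_one]
  have hA : Set.EqOn g (fun _ => A) (Set.uIoo 0 α) := by
    intro x hx
    rw [Set.uIoo_of_le h₀] at hx
    simp only [g, Int.fract_eq_self.2 ⟨hx.1.le, hx.2.trans_le h₁⟩, hx.2.le, if_true]
  have hB : Set.EqOn g (fun _ => B) (Set.uIoo α 1) := by
    intro x hx
    rw [Set.uIoo_of_le h₁] at hx
    simp only [g, Int.fract_eq_self.2 ⟨h₀.trans hx.1.le, hx.2⟩, not_le.2 hx.1, if_false]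
  have hint : ∀ {u v : ℝ} {C : ℝ}, Set.EqOn g (fun _ => C) (Set.uIoo u v) →
      IntervalIntegrable g volume u v := fun h =>
    (intervalIntegrable_congr_uIoo h).2 intervalIntegrable_const
  calc ∫ x in a..a + 1, g x = ∫ x in (0 : ℝ)..0 + 1, g x := hper.intervalIntegral_add_eq a 0
    _ = (∫ x in (0 : ℝ)..α, g x) + ∫ x in α..1, g x := by
      rw [zero_add, intervalIntegral.integral_add_adjacent_intervals (hint hA) (hint hB)]
    _ = α * A + (1 - α) * B := by
      rw [intervalIntegral.integral_congr_uIoo hA, intervalIntegral.integral_congr_uIoo hB]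
      simp

theorem capacity_one_dimensional_general (θ c : ℝ) (hθ : 0 < θ)
    (β : ℤ) (hβ : β = ⌊1 / θ⌋) (α : ℝ) (hα : α = 1 / θ - β) (N : ℝ → ℕ)
    (hN : ∀ f : ℝ, N f = Nat.card {k : ℤ | |f - k * θ| ≤ 1 / 2}) :
    (1 / θ) * ∫ f in (-θ / 2)..(θ / 2), Real.log (1 + c * θ * N f) =
      α * Real.log (1 + (β + 1) * θ * c) + (1 - α) * Real.log (1 + β * θ * c) := by
  have hαfract : α = Int.fract (1 / θ) := by rw [hα, hβ, Int.fract]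
  have hintegrand (f : ℝ) : Real.log (1 + c * θ * N f) =
      if Int.fract (f / θ + 1 / (2 * θ)) ≤ α then Real.log (1 + (β + 1) * θ * c)
      else Real.log (1 + β * θ * c) := by
    rw [hN, natCard_setOf_abs_sub_mul_le hθ (by norm_num), hαfract, hβ,
      show 2 * (1 / 2) / θ = 1 / θ by ring, show (f + 1 / 2) / θ = f / θ + 1 / (2 * θ) by ring]
    split_ifs <;> ring_nf
  have hend : θ / 2 / θ + 1 / (2 * θ) = -θ / 2 / θ + 1 / (2 * θ) + 1 := by field_simp; ring
  simp_rw [hintegrand]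
  rw [intervalIntegral.integral_comp_div_add (fun x => if Int.fract x ≤ α then _ else _) hθ.ne',
    hend, intervalIntegral_ite_fract_le _ (hαfract ▸ Int.fract_nonneg _)
      (hαfract ▸ (Int.fract_lt_one _).le), smul_eq_mul]
  field_simp

/-- Capacity formula (Property 3): with `θ > 0`, `c > 0`, `β = ⌊1/θ⌋`, `α = 1/θ − β`, and
`N f` the number of integers `k` with `|f − kθ| ≤ 1/2`, we have
`(1/θ)·∫_{−θ/2}^{θ/2} log(1 + c·θ·N(f)) df = α·log(1 + (β+1)·θ·c) + (1 − α)·log(1 + β·θ·c)`. -/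
theorem capacity_one_dimensional (θ c : ℝ) (hθ : 0 < θ) (hc : 0 < c)
    (β : ℤ) (hβ : β = ⌊1 / θ⌋) (α : ℝ) (hα : α = 1 / θ - β) (N : ℝ → ℕ)
    (hN : ∀ f : ℝ, N f = Nat.card {k : ℤ | |f - k * θ| ≤ 1 / 2}) :
    (1 / θ) * ∫ f in (-θ / 2)..(θ / 2), Real.log (1 + c * θ * N f) =
      α * Real.log (1 + (β + 1) * θ * c) + (1 - α) * Real.log (1 + β * θ * c) :=
  capacity_one_dimensional_general θ c hθ β hβ α hα N hN
end

section
/- Fix λ > 0, θ > 0, ζ > 0, set Δ_x = λ/(2θ), β = ⌊1/θ⌋ and α = 1/θ − β, and for t > 0 define Ĉ(t) = (1/Δ_x)·[ α·log(1 + (β+1)·θ·ζ·Δ_x·t) + (1 − α)·log(1 + β·θ·ζ·Δ_x·t) ]. Then the limit as t → ∞ of Ĉ(t)/log(t) equals 2/λ if θ ≥ 1, and equals 2θ/λ if 0 < θ < 1. -/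
open Real Filter

/-! Since `log (1 + c t) = log t + log (c + 1/t)`, each logarithm in `Ĉ` with a positive
coefficient grows like `log t`. If `⌊1/θ⌋ ≥ 1` both do and the weights `α`, `1 - α` add up to `1`;
if `⌊1/θ⌋ = 0` the second logarithm vanishes and only the weight `α = 1/θ` remains. Hence
`Ĉ(t) / log t → (1/Δₓ) · min (1/θ) 1`. -/

theorem tendsto_log_one_add_mul_div_log {c : ℝ} (hc : 0 < c) :
    Tendsto (fun t => log (1 + c * t) / log t) atTop (nhds 1) := by
  have h_remainder : Tendsto (fun t => log (c + t⁻¹)) atTop (nhds (log c)) :=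
    ((continuousAt_log hc.ne').tendsto.comp
      (by simpa using tendsto_inv_atTop_zero.const_add c))
  have h_lim := (h_remainder.div_atTop tendsto_log_atTop).const_add 1
  rw [add_zero] at h_lim
  refine h_lim.congr' ?_
  filter_upwards [eventually_gt_atTop 1] with t ht
  have ht0 : 0 < t := one_pos.trans ht
  have h_split : 1 + c * t = t * (c + t⁻¹) := by field_simp; ring
  rw [h_split, log_mul ht0.ne' (by positivity), add_div, div_self (log_pos ht).ne']

theorem tendsto_fract_floor_log_div_log {x k : ℝ} (hx : 0 ≤ x) (hk : 0 < k) :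
    Tendsto (fun t => (Int.fract x * log (1 + (⌊x⌋ + 1) * k * t) +
        (1 - Int.fract x) * log (1 + ⌊x⌋ * k * t)) / log t) atTop (nhds (min x 1)) := by
  have h_floor_nonneg : (0 : ℝ) ≤ ⌊x⌋ := by exact_mod_cast Int.floor_nonneg.mpr hx
  have h_upper := tendsto_log_one_add_mul_div_log (c := (⌊x⌋ + 1) * k)
    (mul_pos (by linarith) hk)
  simp only [add_div, mul_div_assoc]
  rcases lt_or_ge x 1 with hx1 | hx1
  · have h_floor : ⌊x⌋ = 0 := Int.floor_eq_zero_iff.mpr ⟨hx, hx1⟩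
    have h_fract : Int.fract x = x := Int.fract_eq_self.mpr ⟨hx, hx1⟩
    simp only [h_floor, h_fract, Int.cast_zero, zero_add, zero_mul, log_one, zero_div,
      mul_zero, add_zero] at h_upper ⊢
    simpa [min_eq_left hx1.le] using h_upper.const_mul x
  · have h_lower := tendsto_log_one_add_mul_div_log (c := ⌊x⌋ * k)
      (mul_pos (by exact_mod_cast Int.floor_pos.mpr hx1) hk)
    simpa [min_eq_right hx1] using
      (h_upper.const_mul (Int.fract x)).add (h_lower.const_mul (1 - Int.fract x))

/-- Number of independent signal dimensions per meter for the one-dimensional deployment: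
with `Δₓ = λ/(2θ)`, `β = ⌊1/θ⌋`, `α = 1/θ − β` and space-normalized capacity
`Ĉ(t) = (1/Δₓ)·[α·log(1 + (β+1)·θ·ζ·Δₓ·t) + (1 − α)·log(1 + β·θ·ζ·Δₓ·t)]`, the pre-log
factor `lim_{t→∞} Ĉ(t)/log t` equals `2/λ` if `θ ≥ 1` and `2θ/λ` if `0 < θ < 1`. -/
theorem prelog_one_dimensional (lam θ ζ : ℝ) (hlam : 0 < lam) (hθ : 0 < θ) (hζ : 0 < ζ)
    (Δx : ℝ) (hΔx : Δx = lam / (2 * θ)) (β : ℤ) (hβ : β = ⌊1 / θ⌋)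
    (α : ℝ) (hα : α = 1 / θ - β) (C : ℝ → ℝ)
    (hC : ∀ t : ℝ, C t = (1 / Δx) *
      (α * Real.log (1 + (β + 1) * θ * ζ * Δx * t) +
       (1 - α) * Real.log (1 + β * θ * ζ * Δx * t))) :
    (1 ≤ θ →
      Filter.Tendsto (fun t : ℝ => C t / Real.log t) atTop (nhds (2 / lam))) ∧
    (θ < 1 →
      Filter.Tendsto (fun t : ℝ => C t / Real.log t) atTop (nhds (2 * θ / lam))) := by
  have hΔ : 0 < Δx := by rw [hΔx]; positivity
  have h_lim : Tendsto (fun t => C t / log t) atTop (nhds (1 / Δx * min (1 / θ) 1)) := by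
    refine ((tendsto_fract_floor_log_div_log (one_div_pos.mpr hθ).le
      (by positivity : 0 < θ * ζ * Δx)).const_mul (1 / Δx)).congr fun t => ?_
    rw [hC, hα, hβ, Int.self_sub_floor]
    simp only [mul_assoc]
    ring
  refine ⟨fun hθ1 => ?_, fun hθ1 => ?_⟩
  · convert h_lim using 2
    rw [min_eq_left ((div_le_one hθ).mpr hθ1), hΔx]
    field_simp
  · convert h_lim using 2
    rw [min_eq_right ((one_le_div hθ).mpr hθ1.le), hΔx]
    field_simp
end

section
/- For all λ > 0, P̂ > 0 and N₀ > 0, set N = λ·P̂/(4π·N₀). Then 2π·∫_{0}^{1/λ} s·log(1 + N·λ/√(1 − λ²s²)) ds = π·( log(1 + λN)/λ² + N²·log( Nλ/(1 + Nλ) ) + N/λ ). -/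
/-!
Substituting `v = √(1 - λ²s²)`, so that `s ds = -v dv / λ²`, turns the integral into
`λ⁻² ∫₀¹ v log (1 + a/v) dv` with `a = Nλ`, and `v log (1 + a/v)` has the elementary
antiderivative `mulLogOneAddDivAntideriv a`. Since the integrand is nonnegative, the fundamental
theorem of calculus applies without a separate integrability argument for the logarithmic
singularity at `s = 1/λ`.
-/
open MeasureTheory Real Set

noncomputable def mulLogOneAddDivAntideriv (a v : ℝ) : ℝ :=
  (v ^ 2 - a ^ 2) / 2 * log (v + a) + a * v / 2 - v / 2 * (v * log v)

theorem hasDerivAt_mulLogOneAddDivAntideriv {a v : ℝ} (ha : 0 ≤ a) (hv : 0 < v) :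
    HasDerivAt (mulLogOneAddDivAntideriv a) (v * log (1 + a / v)) v := by
  have hva : v + a ≠ 0 := by positivity
  have h := (((((hasDerivAt_pow 2 v).sub_const (a ^ 2)).div_const 2).mul
    (((hasDerivAt_id' v).add_const a).log hva)).add
      (((hasDerivAt_id' v).const_mul a).div_const 2)).sub
    (((hasDerivAt_id' v).div_const 2).mul (hasDerivAt_mul_log hv.ne'))
  refine h.congr_deriv ?_
  rw [show 1 + a / v = (v + a) / v by field_simp, log_div hva hv.ne']
  field_simp
  ring

theorem continuousOn_mulLogOneAddDivAntideriv {a : ℝ} (ha : 0 < a) :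
    ContinuousOn (mulLogOneAddDivAntideriv a) (Ici 0) := by
  have hlog : ContinuousOn (fun v : ℝ => log (v + a)) (Ici 0) :=
    ContinuousOn.log (by fun_prop) fun v (hv : 0 ≤ v) => by positivity
  have hmulLog : Continuous fun v : ℝ => v / 2 * (v * log v) :=
    (continuous_id.div_const 2).mul continuous_mul_log
  unfold mulLogOneAddDivAntideriv
  fun_prop (disch := assumption)

theorem hasDerivAt_mulLogOneAddDivAntideriv_sqrt {a lam s : ℝ} (ha : 0 ≤ a) (hlam : lam ≠ 0)
    (hs : 0 < 1 - lam ^ 2 * s ^ 2) :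
    HasDerivAt (fun s => -mulLogOneAddDivAntideriv a √(1 - lam ^ 2 * s ^ 2) / lam ^ 2)
      (s * log (1 + a / √(1 - lam ^ 2 * s ^ 2))) s := by
  have hsqrt : 0 < √(1 - lam ^ 2 * s ^ 2) := sqrt_pos.2 hs
  have h := (((hasDerivAt_mulLogOneAddDivAntideriv ha hsqrt).comp s
    ((((hasDerivAt_pow 2 s).const_mul (lam ^ 2)).const_sub 1).sqrt hs.ne')).neg).div_const
      (lam ^ 2)
  refine h.congr_deriv ?_
  field_simp
  push_cast
  ring

theorem integral_mul_log_one_add_div_sqrt {a lam : ℝ} (ha : 0 < a) (hlam : 0 < lam) :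
    ∫ s in (0 : ℝ)..(1 / lam), s * log (1 + a / √(1 - lam ^ 2 * s ^ 2)) =
      (log (1 + a) + a ^ 2 * log (a / (1 + a)) + a) / (2 * lam ^ 2) := by
  set G : ℝ → ℝ := fun s => -mulLogOneAddDivAntideriv a √(1 - lam ^ 2 * s ^ 2) / lam ^ 2
  have hend : (0 : ℝ) ≤ 1 / lam := by positivity
  have hcont : ContinuousOn G (Icc 0 (1 / lam)) :=
    (((continuousOn_mulLogOneAddDivAntideriv ha).comp (by fun_prop)
      fun s _ => sqrt_nonneg _).neg).div_const _
  have hderiv : ∀ s ∈ Ioo (0 : ℝ) (1 / lam),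
      HasDerivAt G (s * log (1 + a / √(1 - lam ^ 2 * s ^ 2))) s := by
    rintro s ⟨hs0, hs1⟩
    have hlam_s : lam * s < 1 := by rwa [lt_div_iff₀' hlam] at hs1
    exact hasDerivAt_mulLogOneAddDivAntideriv_sqrt ha.le hlam.ne'
      (by nlinarith [mul_pos hlam hs0])
  have hnonneg : ∀ s ∈ Ioo (0 : ℝ) (1 / lam),
      0 ≤ s * log (1 + a / √(1 - lam ^ 2 * s ^ 2)) := fun s hs =>
    mul_nonneg hs.1.le (log_nonneg (le_add_of_nonneg_right (by positivity)))
  have hint := (intervalIntegrable_iff_integrableOn_Ioc_of_le hend).2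
    (intervalIntegral.integrableOn_deriv_of_nonneg hcont hderiv hnonneg)
  rw [intervalIntegral.integral_eq_sub_of_hasDerivAt_of_le hend hcont hderiv hint]
  have hzero : 1 - lam ^ 2 * (1 / lam) ^ 2 = 0 := by field_simp; ring
  simp only [G, hzero, mulLogOneAddDivAntideriv]
  norm_num
  rw [log_div ha.ne' (by positivity)]
  field_simp
  ring

/-- Closed-form space-normalized capacity for the two-dimensional deployment: with
`N = λ·P̂/(4π·N₀)`,
`2π·∫₀^{1/λ} s·log(1 + Nλ/√(1 − λ²s²)) ds
  = π·(log(1 + λN)/λ² + N²·log(Nλ/(1 + Nλ)) + N/λ)`. -/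
theorem capacity_two_dimensional_closed_form (lam P N₀ : ℝ) (hlam : 0 < lam)
    (hP : 0 < P) (hN₀ : 0 < N₀) (N : ℝ) (hN : N = lam * P / (4 * π * N₀)) :
    2 * π * ∫ s in (0 : ℝ)..(1 / lam),
        s * Real.log (1 + N * lam / Real.sqrt (1 - lam ^ 2 * s ^ 2)) =
      π * (Real.log (1 + lam * N) / lam ^ 2 +
        N ^ 2 * Real.log (N * lam / (1 + N * lam)) + N / lam) := by
  have hNpos : 0 < N := by rw [hN]; positivity
  rw [integral_mul_log_one_add_div_sqrt (mul_pos hNpos hlam) hlam, mul_comm lam N]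
  field_simp
end

section
/- Fix P̂ > 0 and N₀ > 0, and for λ > 0 set N = λ·P̂/(4π·N₀) and Ĉ(λ) = π·( log(1 + λN)/λ² + N²·log( Nλ/(1 + Nλ) ) + N/λ ). Then the limit of Ĉ(λ) as λ → 0⁺ equals P̂/(2N₀). -/
/-! Writing `s = Nλ = cλ²` with `c = P̂/(4πN₀)`, the first term `log(1 + s)/λ²` tends to `c`
because `log(1 + c t)` has derivative `c` at `0`, the third term `N/λ` is identically `c`, and the
middle term is `c · (1 + s) · u log u` with `u = s/(1 + s) → 0`, so it vanishes in the limit by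
continuity of `u ↦ u log u`. Hence `Ĉ(λ) → π · 2c = P̂/(2N₀)`. -/

open MeasureTheory Real Filter
open Topology

lemma tendsto_log_one_add_mul_div (c : ℝ) :
    Tendsto (fun t : ℝ => log (1 + c * t) / t) (𝓝[≠] 0) (𝓝 c) := by
  have hderiv : HasDerivAt (fun t : ℝ => log (1 + c * t)) c 0 := by
    simpa using ((hasDerivAt_id (0 : ℝ)).const_mul c).const_add 1 |>.log (by simp)
  refine hderiv.tendsto_slope_zero.congr fun t => ?_
  simp [div_eq_inv_mul]

lemma tendsto_sq_nhdsNE_zero : Tendsto (fun x : ℝ => x ^ 2) (𝓝[≠] 0) (𝓝[≠] 0) := by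
  refine tendsto_nhdsWithin_of_tendsto_nhds_of_eventually_within _ ?_ ?_
  · simpa using ((continuous_pow 2).tendsto (0 : ℝ)).mono_left nhdsWithin_le_nhds
  · filter_upwards [self_mem_nhdsWithin] with x hx using pow_ne_zero 2 hx

lemma mul_log_div_one_add_eq (s : ℝ) :
    s * log (s / (1 + s)) = (1 + s) * (s / (1 + s) * log (s / (1 + s))) := by
  rcases eq_or_ne (1 + s) 0 with h | h
  · simp [h]
  · rw [← mul_assoc, mul_div_cancel₀ _ h]

lemma Filter.Tendsto.mul_log_div_one_add {α : Type*} {l : Filter α} {s : α → ℝ}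
    (hs : Tendsto s l (𝓝 0)) : Tendsto (fun x => s x * Real.log (s x / (1 + s x))) l (𝓝 0) := by
  have hden : Tendsto (fun x => 1 + s x) l (𝓝 1) := by
    simpa using tendsto_const_nhds.add hs
  have hu : Tendsto (fun x => s x / (1 + s x)) l (𝓝 0) := by
    rw [← zero_div 1]
    exact hs.div hden one_ne_zero
  have hulogu := (continuous_mul_log.tendsto 0).comp hu
  simp only [zero_mul] at hulogu
  simpa only [mul_zero] using (hden.mul hulogu).congr fun x => (mul_log_div_one_add_eq (s x)).symm

lemma tendsto_capacity_of_linear (c : ℝ) :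
    Tendsto (fun lam : ℝ =>
        π * (log (1 + lam * (lam * c)) / lam ^ 2 +
          (lam * c) ^ 2 * log (lam * c * lam / (1 + lam * c * lam)) + lam * c / lam))
      (𝓝[≠] 0) (𝓝 (2 * π * c)) := by
  have hfirst : Tendsto (fun lam : ℝ => log (1 + lam * (lam * c)) / lam ^ 2) (𝓝[≠] 0) (𝓝 c) := by
    refine ((tendsto_log_one_add_mul_div c).comp tendsto_sq_nhdsNE_zero).congr fun lam => ?_
    simp only [Function.comp_apply]
    ring_nf
  have hs : Tendsto (fun lam : ℝ => lam * c * lam) (𝓝[≠] 0) (𝓝 0) := by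
    have hcont : Continuous fun lam : ℝ => lam * c * lam := by fun_prop
    simpa using (hcont.tendsto 0).mono_left nhdsWithin_le_nhds
  have hmiddle : Tendsto (fun lam : ℝ => (lam * c) ^ 2 * log (lam * c * lam / (1 + lam * c * lam)))
      (𝓝[≠] 0) (𝓝 0) := by
    simpa only [mul_zero] using (hs.mul_log_div_one_add.const_mul c).congr fun lam => by ring
  have hlast : (fun lam : ℝ => lam * c / lam) =ᶠ[𝓝[≠] 0] fun _ => c := by
    filter_upwards [self_mem_nhdsWithin] with lam hlam using mul_div_cancel_left₀ c hlam
  convert ((hfirst.add hmiddle).add (tendsto_const_nhds.congr' hlast.symm)).const_mul π using 2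
  ring

theorem capacity_two_dimensional_limit_general (P N₀ : ℝ) :
    Filter.Tendsto
      (fun lam : ℝ =>
        π * (Real.log (1 + lam * (lam * P / (4 * π * N₀))) / lam ^ 2 +
          (lam * P / (4 * π * N₀)) ^ 2 *
            Real.log ((lam * P / (4 * π * N₀)) * lam / (1 + (lam * P / (4 * π * N₀)) * lam)) +
          (lam * P / (4 * π * N₀)) / lam))
      (nhdsWithin 0 (Set.Ioi 0)) (nhds (P / (2 * N₀))) := by
  have hlimit : 2 * π * (P / (4 * π * N₀)) = P / (2 * N₀) := by
    rw [show 4 * π * N₀ = (2 * π) * (2 * N₀) by ring, mul_div_assoc',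
      mul_div_mul_left _ _ (by positivity)]
  simp_rw [mul_div_assoc _ P, ← hlimit]
  exact (tendsto_capacity_of_linear _).mono_left (nhdsGT_le_nhdsNE 0)

/-- Corollary 2: with `N(λ) = λ·P̂/(4π·N₀)` and
`Ĉ(λ) = π·(log(1 + λN)/λ² + N²·log(Nλ/(1 + Nλ)) + N/λ)`, the space-normalized capacity
`Ĉ(λ)` tends to `P̂/(2N₀)` as the wavelength `λ → 0⁺`. -/
theorem capacity_two_dimensional_limit (P N₀ : ℝ) (hP : 0 < P) (hN₀ : 0 < N₀) :
    Filter.Tendsto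
      (fun lam : ℝ =>
        π * (Real.log (1 + lam * (lam * P / (4 * π * N₀))) / lam ^ 2 +
          (lam * P / (4 * π * N₀)) ^ 2 *
            Real.log ((lam * P / (4 * π * N₀)) * lam / (1 + (lam * P / (4 * π * N₀)) * lam)) +
          (lam * P / (4 * π * N₀)) / lam))
      (nhdsWithin 0 (Set.Ioi 0)) (nhds (P / (2 * N₀))) :=
  capacity_two_dimensional_limit_general P N₀
end

section
/- Fix λ > 0, and for t > 0 set N(t) = λ·t/(4π) and Ĉ(t) = π·( log(1 + λ·N(t))/λ² + N(t)²·log( N(t)·λ/(1 + N(t)·λ) ) + N(t)/λ ). Then the limit as t → ∞ of Ĉ(t)/log(t) equals π/λ². -/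
open MeasureTheory Real Filter

/-! With `u = λ N(t)`, which is linear in `t`, one has
`λ² Ĉ(t) / π = log (1 + u) + (u + u² log (u / (1 + u)))`. The second summand stays in `[0, 1]`
(it is `(x - log (1 + x)) / x²` at `x = 1 / u`), and `log (1 + u) - log t` converges, so the
numerator is `log t + O(1)`. -/

namespace Real

theorem tendsto_div_log_of_isBigO_sub_log {f : ℝ → ℝ}
    (hf : (f - log) =O[atTop] (fun _ => (1 : ℝ))) :
    Tendsto (fun t => f t / log t) atTop (nhds 1) :=
  (Asymptotics.isEquivalent_iff_tendsto_one
      (tendsto_log_atTop.eventually_ne_atTop 0)).1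
    (hf.trans_isLittleO isLittleO_const_log_atTop).isEquivalent

theorem tendsto_log_one_add_mul_sub_log {c : ℝ} (hc : 0 < c) :
    Tendsto (fun t => log (1 + c * t) - log t) atTop (nhds (log c)) := by
  have h := ((tendsto_log_comp_add_sub_log 1).comp
    (tendsto_id.const_mul_atTop hc)).const_add (log c)
  rw [add_zero] at h
  refine h.congr' ?_
  filter_upwards [eventually_gt_atTop 0] with t ht
  simp only [Function.comp_apply, id_eq]
  rw [log_mul hc.ne' ht.ne', add_comm 1]
  ring

theorem add_sq_mul_log_div_one_add_mem_Icc {u : ℝ} (hu : 0 < u) :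
    u + u ^ 2 * log (u / (1 + u)) ∈ Set.Icc 0 1 := by
  have hx : 0 < u / (1 + u) := by positivity
  have hlower : -u⁻¹ ≤ log (u / (1 + u)) := by
    have h : 1 - (u / (1 + u))⁻¹ = -u⁻¹ := by field_simp; ring
    exact h ▸ one_sub_inv_le_log_of_pos hx
  have hupper : log (u / (1 + u)) ≤ -(1 + u)⁻¹ := by
    have h : u / (1 + u) - 1 = -(1 + u)⁻¹ := by field_simp; ring
    exact h ▸ log_le_sub_one_of_pos hx
  constructor
  · calc (0 : ℝ) = u + u ^ 2 * -u⁻¹ := by field_simp; ring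
      _ ≤ _ := by gcongr
  · calc u + u ^ 2 * log (u / (1 + u)) ≤ u + u ^ 2 * -(1 + u)⁻¹ := by gcongr
      _ = 1 - (1 + u)⁻¹ := by field_simp; ring
      _ ≤ 1 := by simp only [sub_le_self_iff, inv_nonneg]; positivity

theorem isBigO_add_sq_mul_log_div_one_add :
    (fun u => u + u ^ 2 * log (u / (1 + u))) =O[atTop] (fun _ => (1 : ℝ)) := by
  refine Asymptotics.IsBigO.of_bound 1 ?_
  filter_upwards [eventually_gt_atTop 0] with u hu
  obtain ⟨h0, h1⟩ := add_sq_mul_log_div_one_add_mem_Icc hu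
  rw [norm_one, mul_one, norm_of_nonneg h0]
  exact h1

end Real

/-- Property 5: with `N(t) = λ·t/(4π)` and
`Ĉ(t) = π·(log(1 + λ·N(t))/λ² + N(t)²·log(N(t)·λ/(1 + N(t)·λ)) + N(t)/λ)`, the pre-log
factor `lim_{t→∞} Ĉ(t)/log t` equals `π/λ²`: there are `π` independent signal dimensions
for every `λ²` of deployed surface-area. -/
theorem prelog_two_dimensional (lam : ℝ) (hlam : 0 < lam) (N : ℝ → ℝ)
    (hN : ∀ t : ℝ, N t = lam * t / (4 * π)) (C : ℝ → ℝ)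
    (hC : ∀ t : ℝ, C t =
      π * (Real.log (1 + lam * N t) / lam ^ 2 +
        (N t) ^ 2 * Real.log (N t * lam / (1 + N t * lam)) + N t / lam)) :
    Filter.Tendsto (fun t : ℝ => C t / Real.log t) atTop (nhds (π / lam ^ 2)) := by
  set c := lam ^ 2 / (4 * π)
  have hc : 0 < c := by positivity
  have hNc : ∀ t, N t = c * t / lam := fun t => by simp only [hN, c]; field_simp
  set g := fun u : ℝ => u + u ^ 2 * log (u / (1 + u))
  have hCg : ∀ t, C t = π / lam ^ 2 * (log (1 + c * t) + g (c * t)) := fun t => by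
    rw [hC, hNc, mul_div_cancel₀ _ hlam.ne', div_mul_cancel₀ _ hlam.ne']
    field_simp
    ring
  have hlim : Tendsto (fun t => (log (1 + c * t) + g (c * t)) / log t) atTop (nhds 1) := by
    refine tendsto_div_log_of_isBigO_sub_log ?_
    have hbig := (tendsto_log_one_add_mul_sub_log hc).isBigO_one ℝ |>.add
      (isBigO_add_sq_mul_log_div_one_add.comp_tendsto (tendsto_id.const_mul_atTop hc))
    refine hbig.congr_left fun t => ?_
    simp only [Pi.sub_apply, Function.comp_apply, id_eq]
    ring
  simpa only [hCg, mul_div_assoc, mul_one] using hlim.const_mul (π / lam ^ 2)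
end

section
/- Let v, w ∈ ℝ² be linearly independent, let L = { m·v + n·w : m, n ∈ ℤ } be the lattice they generate, and let V(L) = { x ∈ ℝ² : ‖x‖ ≤ ‖x − p‖ for every p ∈ L } be its Voronoi cell around the origin (the fundamental cell). If V(L) is contained in the closed Euclidean disc of radius R > 0 centered at the origin, then the covolume |det(v, w)| of the lattice satisfies |det(v, w)| ≤ (3√3/2)·R². -/
open Real Metric

/-!
Let `u` be a shortest nonzero lattice vector, so that `u / 2` lies in the Voronoi cell `V`.
Walking from `u / 2` along the perpendicular bisector of `0` and `u`, we must leave the bounded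
cell `V`; at the exit point `x` a third lattice point `p` becomes as close to `x` as `0` and `u`.
So `0`, `u`, `p` lie on the circle of radius `‖x‖ ≤ R` around `x`, and a triangle inscribed in
such a circle has area at most `3√3/4 · ‖x‖²` (the equilateral one is extremal), i.e.
`|det (u, p)| ≤ 3√3/2 · R²`. Three distinct points of a circle are not collinear, so `det (u, p)`
is a nonzero integer multiple of `det (v, w)`.
-/

section Voronoi

variable {E : Type*} [NormedAddCommGroup E]

def voronoiCell (L : Set E) : Set E := {x | ∀ p ∈ L, ‖x‖ ≤ ‖x - p‖}

lemma isClosed_voronoiCell (L : Set E) : IsClosed (voronoiCell L) := by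
  simp only [voronoiCell, Set.ofPred_forall]
  exact isClosed_biInter fun p _ => isClosed_le continuous_norm (by fun_prop)

variable {L : Set E}

open Filter Topology in
lemma exists_norm_le_norm_sub_of_dist_lt (hL : ∀ c r, (L ∩ closedBall c r).Finite) (x : E) :
    ∃ δ > 0, ∀ y, dist y x < δ → ∀ p ∈ L, ‖x‖ < ‖x - p‖ → ‖y‖ ≤ ‖y - p‖ := by
  set F := {p ∈ L ∩ closedBall x (‖x‖ + 1) | ‖x‖ < ‖x - p‖}
  have hF : F.Finite := (hL x _).subset fun p hp => hp.1
  have hgap : ∀ᶠ δ in 𝓝[>] (0 : ℝ), 0 < δ ∧ δ ≤ 1 ∧ ∀ p ∈ F, δ ≤ ‖x - p‖ - ‖x‖ := by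
    refine eventually_mem_nhdsWithin.and
      (nhdsWithin_le_nhds ((eventually_le_nhds one_pos).and ?_))
    exact (eventually_all_finite hF).2 fun p hp => eventually_le_nhds (sub_pos.2 hp.2)
  obtain ⟨δ, hδ0, hδ1, hδF⟩ := hgap.exists
  refine ⟨δ / 2, half_pos hδ0, fun y hy p hp hxp => ?_⟩
  have hyx : ‖y‖ ≤ ‖x‖ + dist y x := by
    simpa [dist_eq_norm] using norm_le_norm_add_norm_sub' y x
  have hxy : ‖x - p‖ ≤ dist y x + ‖y - p‖ := by
    simpa [dist_eq_norm', sub_add_sub_cancel] using norm_add_le (x - y) (y - p)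
  by_cases hpF : p ∈ F
  · linarith [hδF p hpF]
  · have : ‖x‖ + 1 < ‖x - p‖ := by
      by_contra! h
      exact hpF ⟨⟨hp, by rwa [mem_closedBall, dist_eq_norm']⟩, hxp⟩
    linarith

lemma exists_forall_norm_le_norm {v : E} (hL : ∀ c r, (L ∩ closedBall c r).Finite)
    (hv : v ∈ L) (hv0 : v ≠ 0) : ∃ u ∈ L, u ≠ 0 ∧ ∀ p ∈ L, p ≠ 0 → ‖u‖ ≤ ‖p‖ := by
  obtain ⟨u, ⟨⟨huL, huv⟩, hu0⟩, hmin⟩ := Set.exists_min_image ((L ∩ closedBall 0 ‖v‖) \ {0})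
    (‖·‖) ((hL 0 _).sdiff) ⟨v, ⟨hv, by simp⟩, hv0⟩
  refine ⟨u, huL, hu0, fun p hp hp0 => ?_⟩
  rw [mem_closedBall_zero_iff] at huv
  by_cases hpv : ‖p‖ ≤ ‖v‖
  · exact hmin p ⟨⟨hp, mem_closedBall_zero_iff.2 hpv⟩, hp0⟩
  · linarith

section NormedSpace

variable [NormedSpace ℝ E]

lemma half_mem_voronoiCell {u : E} (hmin : ∀ p ∈ L, p ≠ 0 → ‖u‖ ≤ ‖p‖) :
    (2⁻¹ : ℝ) • u ∈ voronoiCell L := by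
  intro p hp
  rcases eq_or_ne p 0 with rfl | hp0
  · simp
  have htri := norm_sub_norm_le p ((2⁻¹ : ℝ) • u)
  rw [norm_smul, Real.norm_of_nonneg (by norm_num : (0 : ℝ) ≤ 2⁻¹)] at htri ⊢
  rw [norm_sub_rev]
  linarith [hmin p hp hp0]

end NormedSpace

variable [InnerProductSpace ℝ E]

lemma norm_half_add_smul_sub {u n : E} (hnu : inner ℝ n u = 0) (t : ℝ) :
    ‖(2⁻¹ : ℝ) • u + t • n - u‖ = ‖(2⁻¹ : ℝ) • u + t • n‖ := by
  have h : ∀ s : ℝ, ‖s • u + t • n‖ ^ 2 = s ^ 2 * ‖u‖ ^ 2 + t ^ 2 * ‖n‖ ^ 2 := fun s => by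
    rw [norm_add_sq_real, real_inner_smul_left, real_inner_smul_right, real_inner_comm n u, hnu,
      norm_smul, norm_smul, mul_pow, mul_pow, Real.norm_eq_abs, Real.norm_eq_abs, sq_abs, sq_abs]
    ring
  rw [show (2⁻¹ : ℝ) • u + t • n - u = (-2⁻¹ : ℝ) • u + t • n by module,
    ← sq_eq_sq₀ (norm_nonneg _) (norm_nonneg _), h, h]
  ring

lemma exists_mem_voronoiCell_norm_sub_eq (hL : ∀ c r, (L ∩ closedBall c r).Finite)
    (hbdd : Bornology.IsBounded (voronoiCell L)) {u n : E} (hu : (2⁻¹ : ℝ) • u ∈ voronoiCell L)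
    (hn : n ≠ 0) (hnu : inner ℝ n u = 0) :
    ∃ x ∈ voronoiCell L, ‖x - u‖ = ‖x‖ ∧ ∃ p ∈ L, p ≠ 0 ∧ p ≠ u ∧ ‖x - p‖ = ‖x‖ := by
  set g : ℝ → E := fun t => (2⁻¹ : ℝ) • u + t • n
  set T := {t : ℝ | 0 ≤ t ∧ g t ∈ voronoiCell L}
  have hT : IsClosed T :=
    isClosed_Ici.inter ((isClosed_voronoiCell L).preimage (by fun_prop))
  obtain ⟨R, hR⟩ := hbdd.subset_closedBall 0
  have hTbdd : BddAbove T := by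
    refine ⟨(R + ‖(2⁻¹ : ℝ) • u‖) / ‖n‖, fun t ⟨ht0, htV⟩ => ?_⟩
    have h1 := norm_sub_le (g t) ((2⁻¹ : ℝ) • u)
    rw [add_sub_cancel_left, norm_smul t n, Real.norm_of_nonneg ht0] at h1
    rw [le_div_iff₀ (norm_pos_iff.2 hn)]
    linarith [mem_closedBall_zero_iff.1 (hR htV)]
  set t₀ := sSup T
  obtain ⟨ht₀, hxV⟩ : t₀ ∈ T := hT.csSup_mem ⟨0, le_rfl, by simpa [g] using hu⟩ hTbdd
  refine ⟨g t₀, hxV, norm_half_add_smul_sub hnu t₀, ?_⟩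
  -- Otherwise the constraints of all other lattice points are slack at `g t₀`, so they stay
  -- satisfied slightly further along the bisector, contradicting the maximality of `t₀`.
  by_contra! hfar
  obtain ⟨δ, hδ, hδV⟩ := exists_norm_le_norm_sub_of_dist_lt hL (g t₀)
  set s := δ / 2 / ‖n‖
  have hs : 0 < s := by positivity
  have hdist : dist (g (t₀ + s)) (g t₀) < δ := by
    rw [dist_eq_norm, show g (t₀ + s) - g t₀ = s • n by simp only [g]; module, norm_smul,
      Real.norm_of_nonneg hs.le, div_mul_cancel₀ _ (norm_ne_zero_iff.2 hn)]
    linarith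
  have hmem : t₀ + s ∈ T := by
    refine ⟨by linarith, fun p hp => ?_⟩
    rcases eq_or_ne p 0 with rfl | hp0
    · simp
    rcases eq_or_ne p u with rfl | hpu
    · exact (norm_half_add_smul_sub hnu _).ge
    exact hδV _ hdist p hp (lt_of_le_of_ne (hxV p hp) (hfar p hp hp0 hpu).symm)
  linarith [le_csSup hTbdd hmem]

lemma eq_zero_or_eq_one_of_norm_sub_smul_eq {x u : E} {α : ℝ} (hu : u ≠ 0)
    (hxu : ‖x - u‖ = ‖x‖) (hxα : ‖x - α • u‖ = ‖x‖) : α = 0 ∨ α = 1 := by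
  have h1 := norm_sub_sq_real x u
  have h2 := norm_sub_sq_real x (α • u)
  rw [hxu] at h1
  rw [hxα, real_inner_smul_right, norm_smul, mul_pow, Real.norm_eq_abs, sq_abs] at h2
  have h : (α * (α - 1)) * ‖u‖ ^ 2 = 0 := by linear_combination α * h1 - h2
  rcases mul_eq_zero.1 h with h | h
  · rcases mul_eq_zero.1 h with h | h
    · exact .inl h
    · exact .inr (sub_eq_zero.1 h)
  · exact absurd (pow_eq_zero_iff two_ne_zero |>.1 h) (norm_ne_zero_iff.2 hu)

end Voronoi

section IntLattice

variable {E : Type*} [AddCommGroup E]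

def intLattice (v w : E) : Set E := {q | ∃ m n : ℤ, q = m • v + n • w}

lemma left_mem_intLattice (v w : E) : v ∈ intLattice v w := ⟨1, 0, by simp⟩

lemma intLattice_eq_span (v w : E) : intLattice v w = Submodule.span ℤ {v, w} := by
  ext q
  simp [intLattice, Submodule.mem_span_pair, eq_comm]

end IntLattice

lemma finite_intLattice_inter_closedBall {E : Type*} [NormedAddCommGroup E] [NormedSpace ℝ E]
    [FiniteDimensional ℝ E] (hE : Module.finrank ℝ E = 2) {v w : E}
    (hvw : LinearIndependent ℝ ![v, w]) (c : E) (r : ℝ) :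
    (intLattice v w ∩ closedBall c r).Finite := by
  have hcard : Fintype.card (Fin 2) = Module.finrank ℝ E := by simp [hE]
  set b := basisOfLinearIndependentOfCardEqFinrank hvw hcard
  have hb : Set.range b = {v, w} := by
    rw [coe_basisOfLinearIndependentOfCardEqFinrank, Matrix.range_cons_cons_empty]
  rw [Set.inter_comm, intLattice_eq_span, ← hb]
  exact ZSpan.setFinite_inter b isBounded_closedBall

section Plane

local notation "ℝ²" => EuclideanSpace ℝ (Fin 2)

def cross (a b : ℝ²) : ℝ := a 0 * b 1 - a 1 * b 0

lemma cross_swap (a b : ℝ²) : cross b a = -cross a b := by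
  unfold cross; ring

lemma cross_zsmul_add_zsmul (v w : ℝ²) (m n m' n' : ℤ) :
    cross (m • v + n • w) (m' • v + n' • w) = ((m * n' - n * m' : ℤ) : ℝ) * cross v w := by
  simp only [cross, PiLp.add_apply, PiLp.smul_apply, zsmul_eq_mul]
  push_cast
  ring

lemma exists_int_cross_eq {v w p q : ℝ²} (hp : p ∈ intLattice v w) (hq : q ∈ intLattice v w) :
    ∃ k : ℤ, cross p q = k * cross v w := by
  obtain ⟨m, n, rfl⟩ := hp
  obtain ⟨m', n', rfl⟩ := hq
  exact ⟨_, cross_zsmul_add_zsmul v w m n m' n'⟩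

lemma exists_ne_zero_inner_eq_zero {u : ℝ²} (hu : u ≠ 0) : ∃ n : ℝ², n ≠ 0 ∧ inner ℝ n u = 0 := by
  refine ⟨!₂[-u 1, u 0], ?_, by simp [PiLp.inner_apply, Fin.sum_univ_two, mul_comm]⟩
  contrapose! hu
  have h0 := congr_fun (congrArg WithLp.ofLp hu) 0
  have h1 := congr_fun (congrArg WithLp.ofLp hu) 1
  ext i; fin_cases i
  · simpa using h1
  · simpa using h0

lemma exists_eq_smul_of_cross_eq_zero {u p : ℝ²} (hu : u ≠ 0) (h : cross u p = 0) :
    ∃ α : ℝ, p = α • u := by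
  unfold cross at h
  obtain hu0 | hu1 : u 0 ≠ 0 ∨ u 1 ≠ 0 := by
    by_contra! h0
    exact hu (by ext i; fin_cases i <;> simp [h0.1, h0.2])
  · refine ⟨p 0 / u 0, ?_⟩
    ext i; fin_cases i
    · simp [hu0]
    · simp only [Fin.mk_one, PiLp.smul_apply, smul_eq_mul]
      field_simp
      linear_combination h
  · refine ⟨p 1 / u 1, ?_⟩
    ext i; fin_cases i
    · simp only [Fin.zero_eta, PiLp.smul_apply, smul_eq_mul]
      field_simp
      linear_combination -h
    · simp [hu1]

lemma exists_eq_norm_mul_cos_sin (x : ℝ²) : ∃ θ, x 0 = ‖x‖ * cos θ ∧ x 1 = ‖x‖ * sin θ := by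
  set z := Complex.orthonormalBasisOneI.repr.symm x
  have hz : ‖z‖ = ‖x‖ := LinearIsometryEquiv.norm_map _ x
  refine ⟨z.arg, ?_, ?_⟩
  · rw [← hz, Complex.norm_mul_cos_arg]; simp [z]
  · rw [← hz, Complex.norm_mul_sin_arg]; simp [z]

lemma sin_add_sin_sub_sin_add_le (a b : ℝ) : sin a + sin b - sin (a + b) ≤ 3 * √3 / 2 := by
  set s := (a + b) / 2
  set t := (a - b) / 2
  have hdiff : sin a + sin b - sin (a + b) = 2 * sin s * (cos t - cos s) := by
    rw [show a = s + t by ring, show b = s - t by ring, show s + t + (s - t) = s + s by ring,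
      sin_add, sin_sub, sin_add]
    ring
  have hmax : 2 * |sin s| * (1 + |cos s|) ≤ 3 * √3 / 2 := by
    have h3 : √3 ^ 2 = 3 := sq_sqrt (by norm_num)
    have hsc : |sin s| ^ 2 + |cos s| ^ 2 = 1 := by rw [sq_abs, sq_abs, sin_sq_add_cos_sq]
    nlinarith [sq_nonneg (2 * |cos s| - 1), sq_nonneg (2 * |sin s| * (1 + |cos s|) - 3 * √3 / 2),
      abs_nonneg (sin s), abs_nonneg (cos s), sqrt_nonneg 3]
  calc sin a + sin b - sin (a + b) = 2 * sin s * (cos t - cos s) := hdiff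
    _ ≤ |2 * sin s * (cos t - cos s)| := le_abs_self _
    _ = 2 * |sin s| * |cos t - cos s| := by rw [abs_mul, abs_mul, abs_two]
    _ ≤ 2 * |sin s| * (1 + |cos s|) := by
      gcongr
      exact (abs_sub _ _).trans (by gcongr; exact abs_cos_le_one t)
    _ ≤ 3 * √3 / 2 := hmax

lemma cross_sub_sub_le_of_norm_eq {a b c : ℝ²} {r : ℝ} (ha : ‖a‖ = r) (hb : ‖b‖ = r)
    (hc : ‖c‖ = r) : cross (b - a) (c - a) ≤ 3 * √3 / 2 * r ^ 2 := by
  obtain ⟨α, ha0, ha1⟩ := exists_eq_norm_mul_cos_sin a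
  obtain ⟨β, hb0, hb1⟩ := exists_eq_norm_mul_cos_sin b
  obtain ⟨γ, hc0, hc1⟩ := exists_eq_norm_mul_cos_sin c
  have hcross : cross (b - a) (c - a) =
      r ^ 2 * (sin (β - α) + sin (γ - β) - sin (β - α + (γ - β))) := by
    rw [show β - α + (γ - β) = γ - α by ring, sin_sub, sin_sub, sin_sub]
    simp only [cross, PiLp.sub_apply, ha0, ha1, hb0, hb1, hc0, hc1, ha, hb, hc]
    ring
  rw [hcross, mul_comm (3 * √3 / 2)]
  exact mul_le_mul_of_nonneg_left (sin_add_sin_sub_sin_add_le _ _) (sq_nonneg r)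

lemma abs_cross_sub_sub_le_of_norm_eq {a b c : ℝ²} {r : ℝ} (ha : ‖a‖ = r) (hb : ‖b‖ = r)
    (hc : ‖c‖ = r) : |cross (b - a) (c - a)| ≤ 3 * √3 / 2 * r ^ 2 := by
  rw [abs_le, neg_le, ← cross_swap]
  exact ⟨cross_sub_sub_le_of_norm_eq ha hc hb, cross_sub_sub_le_of_norm_eq ha hb hc⟩

lemma cross_ne_zero_of_norm_sub_eq {x u p : ℝ²} (hu : u ≠ 0) (hp0 : p ≠ 0) (hpu : p ≠ u)
    (hxu : ‖x - u‖ = ‖x‖) (hxp : ‖x - p‖ = ‖x‖) : cross u p ≠ 0 := by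
  intro h
  obtain ⟨α, rfl⟩ := exists_eq_smul_of_cross_eq_zero hu h
  rcases eq_zero_or_eq_one_of_norm_sub_smul_eq hu hxu hxp with rfl | rfl
  · exact hp0 (zero_smul _ _)
  · exact hpu (one_smul _ _)

end Plane

theorem lattice_covolume_bound_general (v w : EuclideanSpace ℝ (Fin 2))
    (hvw : LinearIndependent ℝ ![v, w]) (R : ℝ)
    (hVoronoi :
      {x : EuclideanSpace ℝ (Fin 2) |
          ∀ p ∈ {q : EuclideanSpace ℝ (Fin 2) | ∃ m n : ℤ, q = m • v + n • w},
            ‖x‖ ≤ ‖x - p‖} ⊆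
        Metric.closedBall (0 : EuclideanSpace ℝ (Fin 2)) R) :
    |v 0 * w 1 - v 1 * w 0| ≤ (3 * Real.sqrt 3 / 2) * R ^ 2 := by
  have hfin := finite_intLattice_inter_closedBall finrank_euclideanSpace_fin hvw
  obtain ⟨u, huL, hu0, hmin⟩ :=
    exists_forall_norm_le_norm hfin (left_mem_intLattice v w) (hvw.ne_zero 0)
  obtain ⟨n, hn0, hnu⟩ := exists_ne_zero_inner_eq_zero hu0
  obtain ⟨x, hxV, hxu, p, hpL, hp0, hpu, hxp⟩ := exists_mem_voronoiCell_norm_sub_eq hfin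
    (isBounded_closedBall.subset hVoronoi) (half_mem_voronoiCell hmin) hn0 hnu
  obtain ⟨k, hk⟩ := exists_int_cross_eq huL hpL
  have hk0 : k ≠ 0 := by
    rintro rfl
    exact cross_ne_zero_of_norm_sub_eq hu0 hp0 hpu hxu hxp (by simpa using hk)
  have hup : |cross u p| ≤ 3 * √3 / 2 * ‖x‖ ^ 2 := by
    simpa using abs_cross_sub_sub_le_of_norm_eq (a := 0 - x) (b := u - x) (c := p - x)
      (by simp) (by rw [norm_sub_rev, hxu]) (by rw [norm_sub_rev, hxp])
  calc |cross v w| ≤ |(k : ℝ)| * |cross v w| :=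
        le_mul_of_one_le_left (abs_nonneg _) (by exact_mod_cast Int.one_le_abs hk0)
    _ = |cross u p| := by rw [hk, abs_mul]
    _ ≤ 3 * √3 / 2 * ‖x‖ ^ 2 := hup
    _ ≤ 3 * √3 / 2 * R ^ 2 := by
      gcongr
      exact mem_closedBall_zero_iff.1 (hVoronoi hxV)

/-- Optimality bound for Property 6: if `v, w` are linearly independent vectors of the
Euclidean plane generating the lattice `L = {m·v + n·w : m, n ∈ ℤ}`, and the Voronoi cell
of `L` around the origin is contained in the closed disc of radius `R > 0`, then the
covolume `|det(v, w)|` is at most `(3√3/2)·R²`. -/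
theorem lattice_covolume_bound (v w : EuclideanSpace ℝ (Fin 2))
    (hvw : LinearIndependent ℝ ![v, w]) (R : ℝ) (hR : 0 < R)
    (hVoronoi :
      {x : EuclideanSpace ℝ (Fin 2) |
          ∀ p ∈ {q : EuclideanSpace ℝ (Fin 2) | ∃ m n : ℤ, q = m • v + n • w},
            ‖x‖ ≤ ‖x - p‖} ⊆
        Metric.closedBall (0 : EuclideanSpace ℝ (Fin 2)) R) :
    |v 0 * w 1 - v 1 * w 0| ≤ (3 * Real.sqrt 3 / 2) * R ^ 2 :=
  lattice_covolume_bound_general v w hvw R hVoronoi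
end

section
/- Let R > 0 and consider the vectors v = (3R/2, −(√3/2)·R) and w = (0, √3·R) in ℝ², generating the hexagonal lattice L = { m·v + n·w : m, n ∈ ℤ }. Then the Voronoi cell V(L) = { x ∈ ℝ² : ‖x‖ ≤ ‖x − p‖ for every p ∈ L } is contained in the closed Euclidean disc of radius R centered at the origin, and the covolume satisfies |det(v, w)| = (3√3/2)·R². -/
/-!
Being closer to the origin than to a lattice vector `p` means `2 ⟪x, p⟫ ≤ ‖p‖²`. Applied to the
six shortest vectors `±v, ±w, ±(v + w)`, all of squared length `3R²`, this bounds
`α = ⟪x, v⟫`, `β = ⟪x, w⟫` and `α + β` in absolute value by `c = 3R²/2`. Inverting the Gram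
matrix of `v, w` gives `α² + αβ + β² = (9R²/4) ‖x‖²`, and this positive definite form is at most
`c²` on the hexagon `|α|, |β|, |α + β| ≤ c` (its vertices attain `c²`), hence `‖x‖ ≤ R`.
-/

open RealInnerProductSpace

section InnerProductSpace

variable {E : Type*} [NormedAddCommGroup E] [InnerProductSpace ℝ E]

theorem norm_le_norm_sub_iff_two_mul_inner_le (x p : E) :
    ‖x‖ ≤ ‖x - p‖ ↔ 2 * ⟪x, p⟫ ≤ ‖p‖ ^ 2 := by
  rw [← pow_le_pow_iff_left₀ (norm_nonneg x) (norm_nonneg _) two_ne_zero, norm_sub_sq_real]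
  constructor <;> intro h <;> linarith

theorem abs_inner_le_of_norm_le_norm_sub {x p : E} (h : ‖x‖ ≤ ‖x - p‖)
    (h' : ‖x‖ ≤ ‖x - -p‖) : |⟪x, p⟫| ≤ ‖p‖ ^ 2 / 2 := by
  rw [norm_le_norm_sub_iff_two_mul_inner_le] at h h'
  rw [inner_neg_right, norm_neg] at h'
  rw [abs_le]
  constructor <;> linarith

end InnerProductSpace

theorem sq_add_mul_add_sq_le_sq {a b c : ℝ} (ha : |a| ≤ c) (hb : |b| ≤ c) (hab : |a + b| ≤ c) :
    a ^ 2 + a * b + b ^ 2 ≤ c ^ 2 := by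
  rw [abs_le] at ha hb hab
  rcases le_total 0 (a * b) with hab0 | hab0
  · nlinarith
  · rcases le_total 0 a with ha0 | ha0 <;> nlinarith

theorem EuclideanSpace.inner_fin_two (x y : EuclideanSpace ℝ (Fin 2)) :
    ⟪x, y⟫ = x 0 * y 0 + x 1 * y 1 := by
  simp [EuclideanSpace.inner_eq_star_dotProduct, Fin.sum_univ_two, dotProduct, mul_comm]

theorem EuclideanSpace.norm_sq_fin_two (x : EuclideanSpace ℝ (Fin 2)) :
    ‖x‖ ^ 2 = x 0 ^ 2 + x 1 ^ 2 := by
  simp [EuclideanSpace.norm_sq_eq, Fin.sum_univ_two]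

section Hexagonal

variable {R : ℝ} {v w : EuclideanSpace ℝ (Fin 2)}

theorem hexagonal_norm_sq (hv : v = ![3 * R / 2, -(Real.sqrt 3 / 2) * R])
    (hw : w = ![0, Real.sqrt 3 * R]) :
    ‖v‖ ^ 2 = 3 * R ^ 2 ∧ ‖w‖ ^ 2 = 3 * R ^ 2 ∧ ‖v + w‖ ^ 2 = 3 * R ^ 2 := by
  have h3 : √3 ^ 2 = 3 := Real.sq_sqrt (by norm_num)
  simp only [EuclideanSpace.norm_sq_fin_two, PiLp.add_apply, hv, hw, Matrix.cons_val_zero,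
    Matrix.cons_val_one]
  refine ⟨?_, ?_, ?_⟩
  · linear_combination R ^ 2 / 4 * h3
  · linear_combination R ^ 2 * h3
  · linear_combination R ^ 2 / 4 * h3

theorem hexagonal_inner_form (x : EuclideanSpace ℝ (Fin 2))
    (hv : v = ![3 * R / 2, -(Real.sqrt 3 / 2) * R]) (hw : w = ![0, Real.sqrt 3 * R]) :
    ⟪x, v⟫ ^ 2 + ⟪x, v⟫ * ⟪x, w⟫ + ⟪x, w⟫ ^ 2 = 9 * R ^ 2 / 4 * ‖x‖ ^ 2 := by
  have h3 : √3 ^ 2 = 3 := Real.sq_sqrt (by norm_num)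
  simp only [EuclideanSpace.inner_fin_two, EuclideanSpace.norm_sq_fin_two, hv, hw,
    Matrix.cons_val_zero, Matrix.cons_val_one]
  linear_combination 3 / 4 * R ^ 2 * x 1 ^ 2 * h3

end Hexagonal

/-- The hexagonal lattice generated by `v = (3R/2, −(√3/2)R)` and `w = (0, √3·R)` has its
Voronoi cell around the origin contained in the closed disc of radius `R`, and attains the
maximal covolume `|det(v, w)| = (3√3/2)·R²`. -/
theorem hexagonal_lattice_optimal (R : ℝ) (hR : 0 < R)
    (v w : EuclideanSpace ℝ (Fin 2))
    (hv : v = ![3 * R / 2, -(Real.sqrt 3 / 2) * R])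
    (hw : w = ![0, Real.sqrt 3 * R]) :
    {x : EuclideanSpace ℝ (Fin 2) |
        ∀ p ∈ {q : EuclideanSpace ℝ (Fin 2) | ∃ m n : ℤ, q = m • v + n • w},
          ‖x‖ ≤ ‖x - p‖} ⊆
      Metric.closedBall (0 : EuclideanSpace ℝ (Fin 2)) R ∧
    |v 0 * w 1 - v 1 * w 0| = (3 * Real.sqrt 3 / 2) * R ^ 2 := by
  refine ⟨fun x hx => ?_, ?_⟩
  · have hL (m n : ℤ) : ‖x‖ ≤ ‖x - (m • v + n • w)‖ := hx _ ⟨m, n, rfl⟩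
    obtain ⟨hv2, hw2, hvw2⟩ := hexagonal_norm_sq hv hw
    have hα : |⟪x, v⟫| ≤ 3 * R ^ 2 / 2 := hv2 ▸
      abs_inner_le_of_norm_le_norm_sub (by simpa using hL 1 0) (by simpa using hL (-1) 0)
    have hβ : |⟪x, w⟫| ≤ 3 * R ^ 2 / 2 := hw2 ▸
      abs_inner_le_of_norm_le_norm_sub (by simpa using hL 0 1) (by simpa using hL 0 (-1))
    have hαβ : |⟪x, v⟫ + ⟪x, w⟫| ≤ 3 * R ^ 2 / 2 := by
      rw [← inner_add_right, ← hvw2]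
      exact abs_inner_le_of_norm_le_norm_sub (by simpa using hL 1 1)
        (by simpa [add_comm] using hL (-1) (-1))
    have hform := sq_add_mul_add_sq_le_sq hα hβ hαβ
    rw [hexagonal_inner_form x hv hw] at hform
    have hx2 : ‖x‖ ^ 2 ≤ R ^ 2 :=
      le_of_mul_le_mul_left (by linarith) (by positivity : 0 < 9 * R ^ 2 / 4)
    rw [mem_closedBall_zero_iff]
    exact (pow_le_pow_iff_left₀ (norm_nonneg x) hR.le two_ne_zero).mp hx2
  · simp only [hv, hw, Matrix.cons_val_zero, Matrix.cons_val_one, mul_zero, sub_zero]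
    rw [abs_of_nonneg (by positivity)]
    ring
end
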